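/- arXiv:1410.4664 — 10 statements merged into one kernel-verified Lean document; each statement's English description precedes it below -/
import Mathlib

section
/- Let X be a locally convex space over the real or complex numbers and E a nonempty subset of X. The convex hull of E is dense in X if and only if for every nonzero continuous linear functional f on X, sup Re(f(E)) = ∞. -/
/-!
A nonzero `f` makes `Re ∘ f` surjective onto `ℝ`, while each closed half-space `{Re f ≤ M}` is
closed and convex; so it cannot contain `E` once the convex hull of `E` is dense. Conversely, a
point outside the closure of the hull is separated from it by Hahn–Banach, which yields a nonzero
`f` with `Re f` bounded above on `E`.
-/

open RCLike Set

section

variable {𝕜 X : Type*} [RCLike 𝕜]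

theorem LinearMap.exists_lt_re_apply_of_ne_zero [AddCommGroup X] [Module 𝕜 X] {f : X →ₗ[𝕜] 𝕜}
    (hf : f ≠ 0) (M : ℝ) : ∃ x, M < re (f x) := by
  obtain ⟨x, hx⟩ := LinearMap.surjective hf ((M + 1 : ℝ) : 𝕜)
  exact ⟨x, by simp [hx]⟩

theorem closure_convexHull_subset_setOf_le [AddCommGroup X] [Module ℝ X] [TopologicalSpace X]
    {E : Set X} {g : X →L[ℝ] ℝ} {M : ℝ} (hE : ∀ x ∈ E, g x ≤ M) :
    closure (convexHull ℝ E) ⊆ {x | g x ≤ M} :=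
  closure_minimal (convexHull_min hE ((convex_Iic M).linear_preimage g.toLinearMap))
    (isClosed_Iic.preimage g.continuous)

variable [AddCommGroup X] [Module 𝕜 X] [Module ℝ X] [IsScalarTower ℝ 𝕜 X] [TopologicalSpace X]

theorem Dense.exists_lt_re_apply_of_convexHull {E : Set X}
    (hE : Dense (convexHull ℝ E)) {f : X →L[𝕜] 𝕜} (hf : f ≠ 0) (M : ℝ) :
    ∃ x ∈ E, M < re (f x) := by
  by_contra! hle
  have hbound := closure_convexHull_subset_setOf_le
    (g := reCLM.comp (f.restrictScalars ℝ)) hle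
  rw [hE.closure_eq] at hbound
  obtain ⟨x, hx⟩ := (f : X →ₗ[𝕜] 𝕜).exists_lt_re_apply_of_ne_zero
    (by exact_mod_cast hf) M
  exact hx.not_ge (hbound (mem_univ x))

theorem exists_ne_zero_re_apply_lt_of_not_dense_convexHull [IsTopologicalAddGroup X]
    [ContinuousSMul 𝕜 X] [LocallyConvexSpace ℝ X] {E : Set X} (hE : E.Nonempty)
    (hd : ¬Dense (convexHull ℝ E)) :
    ∃ f : X →L[𝕜] 𝕜, f ≠ 0 ∧ ∃ u : ℝ, ∀ x ∈ E, re (f x) < u := by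
  have := IsScalarTower.continuousSMul (M := ℝ) (α := X) 𝕜
  obtain ⟨x₀, hx₀⟩ := not_forall.mp hd
  obtain ⟨f, u, hlt, hgt⟩ := RCLike.geometric_hahn_banach_closed_point (𝕜 := 𝕜)
    (convex_convexHull ℝ E).closure isClosed_closure hx₀
  have hsub : E ⊆ closure (convexHull ℝ E) := (subset_convexHull ℝ E).trans subset_closure
  refine ⟨f, ?_, u, fun x hx => hlt x (hsub hx)⟩
  rintro rfl
  obtain ⟨a, ha⟩ := hE
  simpa using (hlt a (hsub ha)).trans hgt

end

theorem convexHull_dense_iff_sup_re_eq_top_general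
    {𝕜 : Type*} [RCLike 𝕜] {X : Type*} [AddCommGroup X] [Module 𝕜 X] [Module ℝ X]
    [IsScalarTower ℝ 𝕜 X] [TopologicalSpace X] [IsTopologicalAddGroup X]
    [ContinuousSMul 𝕜 X] [LocallyConvexSpace ℝ X]
    (E : Set X) (hE : E.Nonempty) :
    Dense (convexHull ℝ E) ↔
      ∀ f : X →L[𝕜] 𝕜, f ≠ 0 → ∀ M : ℝ, ∃ x ∈ E, M < RCLike.re (f x) := by
  refine ⟨fun hd f hf => hd.exists_lt_re_apply_of_convexHull hf, fun h => ?_⟩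
  by_contra hd
  obtain ⟨f, hf, u, hu⟩ := exists_ne_zero_re_apply_lt_of_not_dense_convexHull (𝕜 := 𝕜) hE hd
  obtain ⟨x, hxE, hx⟩ := h f hf u
  exact (hu x hxE).not_gt hx

/-- **Hahn–Banach characterization of dense convex hulls.**
Let `X` be a locally convex space over `𝕜 = ℝ` or `ℂ`, and `E ⊆ X` nonempty.  The convex
hull of `E` is dense in `X` iff for every nonzero continuous linear functional `f` on `X`,
`sup Re (f '' E) = ∞`, i.e. `Re ∘ f` is unbounded above on `E`. -/
theorem convexHull_dense_iff_sup_re_eq_top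
    {𝕜 : Type*} [RCLike 𝕜] {X : Type*} [AddCommGroup X] [Module 𝕜 X] [Module ℝ X]
    [IsScalarTower ℝ 𝕜 X] [TopologicalSpace X] [IsTopologicalAddGroup X]
    [ContinuousSMul 𝕜 X] [ContinuousSMul ℝ X] [LocallyConvexSpace ℝ X]
    (E : Set X) (hE : E.Nonempty) :
    Dense (convexHull ℝ E) ↔
      ∀ f : X →L[𝕜] 𝕜, f ≠ 0 → ∀ M : ℝ, ∃ x ∈ E, M < RCLike.re (f x) :=
  convexHull_dense_iff_sup_re_eq_top_general E hE
end

section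
/- Let T be a continuous linear operator on a locally convex space X and x ∈ X. Then the convex hull of the orbit {Tⁿx : n ≥ 0} is dense in X if and only if for every nonzero continuous linear functional f on X, sup_{n≥0} Re(f(Tⁿx)) = ∞. -/
/-!
The orbit matters only as a nonempty set `s`. If the closed convex hull of `s` misses a point,
Hahn–Banach separates that point from it by a functional whose real part is bounded above on
`s`. Conversely, the real part of a nonzero functional is unbounded above on the whole space, so
a half-space `{re f ≤ M}` containing `s` cannot contain a dense set.
-/

open RCLike Set

namespace RCLike

variable {𝕜 E : Type*} [RCLike 𝕜] [AddCommGroup E] [Module 𝕜 E]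

theorem linearMap_eq_zero_of_re_le {f : E →ₗ[𝕜] 𝕜} {M : ℝ} (h : ∀ z, re (f z) ≤ M) : f = 0 := by
  ext z
  by_contra hz
  have hscaled : f ((((M + 1 : ℝ) : 𝕜) * (f z)⁻¹) • z) = ((M + 1 : ℝ) : 𝕜) := by
    rw [map_smul, smul_eq_mul, mul_assoc, inv_mul_cancel₀ hz, mul_one]
  have := h ((((M + 1 : ℝ) : 𝕜) * (f z)⁻¹) • z)
  rw [hscaled, ofReal_re] at this
  linarith

variable [Module ℝ E] [IsScalarTower ℝ 𝕜 E] [TopologicalSpace E]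

theorem convex_setOf_re_le (f : StrongDual 𝕜 E) (M : ℝ) : Convex ℝ {z | re (f z) ≤ M} :=
  convex_halfSpace_le (reCLM.comp (f.restrictScalars ℝ)).isLinear M

theorem exists_lt_re_of_dense_convexHull {s : Set E} (hs : Dense (convexHull ℝ s))
    {f : StrongDual 𝕜 E} (hf : f ≠ 0) (M : ℝ) : ∃ y ∈ s, M < re (f y) := by
  by_contra! hle
  have hclosed : IsClosed {z | re (f z) ≤ M} :=
    isClosed_le (continuous_re.comp f.continuous) continuous_const
  have hhull : convexHull ℝ s ⊆ {z | re (f z) ≤ M} := convexHull_min hle (convex_setOf_re_le f M)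
  have hall : ∀ z, re (f z) ≤ M := fun z ↦
    closure_minimal hhull hclosed (hs.closure_eq ▸ mem_univ z)
  exact hf (ContinuousLinearMap.coe_injective (linearMap_eq_zero_of_re_le hall))

variable [IsTopologicalAddGroup E] [ContinuousSMul 𝕜 E] [LocallyConvexSpace ℝ E]

theorem dense_convexHull_of_forall_exists_lt_re {s : Set E} (hs : s.Nonempty)
    (h : ∀ f : StrongDual 𝕜 E, f ≠ 0 → ∀ M : ℝ, ∃ y ∈ s, M < re (f y)) :
    Dense (convexHull ℝ s) := by
  have := IsScalarTower.continuousSMul (M := ℝ) (α := E) 𝕜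
  by_contra hnd
  obtain ⟨y, hy⟩ : ∃ y, y ∉ closure (convexHull ℝ s) := by
    simpa [dense_iff_closure_eq, eq_univ_iff_forall] using hnd
  obtain ⟨f, u, hlt, hgt⟩ := geometric_hahn_banach_closed_point (𝕜 := 𝕜)
    (convex_convexHull ℝ s).closure isClosed_closure hy
  have hs_sub : s ⊆ closure (convexHull ℝ s) := (subset_convexHull ℝ s).trans subset_closure
  have hf : f ≠ 0 := by
    rintro rfl
    obtain ⟨a, ha⟩ := hs
    simpa using (hlt a (hs_sub ha)).trans hgt
  obtain ⟨a, ha, hua⟩ := h f hf u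
  exact (hlt a (hs_sub ha)).not_gt hua

theorem dense_convexHull_iff {s : Set E} (hs : s.Nonempty) :
    Dense (convexHull ℝ s) ↔ ∀ f : StrongDual 𝕜 E, f ≠ 0 → ∀ M : ℝ, ∃ y ∈ s, M < re (f y) :=
  ⟨fun hd _ hf M ↦ exists_lt_re_of_dense_convexHull hd hf M,
    dense_convexHull_of_forall_exists_lt_re hs⟩

end RCLike

theorem convexHull_orbit_dense_iff_general
    {𝕜 : Type*} [RCLike 𝕜] {X : Type*} [AddCommGroup X] [Module 𝕜 X] [Module ℝ X]
    [IsScalarTower ℝ 𝕜 X] [TopologicalSpace X] [IsTopologicalAddGroup X]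
    [ContinuousSMul 𝕜 X] [LocallyConvexSpace ℝ X]
    (T : X →L[𝕜] X) (x : X) :
    Dense (convexHull ℝ (Set.range fun n : ℕ => (T ^ n) x)) ↔
      ∀ f : X →L[𝕜] 𝕜, f ≠ 0 → ∀ M : ℝ, ∃ n : ℕ, M < RCLike.re (f ((T ^ n) x)) := by
  simpa only [exists_range_iff] using dense_convexHull_iff (𝕜 := 𝕜) (range_nonempty _)

/-- **Hahn–Banach characterization of convex-cyclic vectors.**  For a continuous linear
operator `T` on a (real or complex) locally convex space `X` and `x ∈ X`, the convex hull of
the orbit `{Tⁿx : n ≥ 0}` is dense in `X` iff for every nonzero continuous linear functional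
`f` on `X`, `sup_{n ≥ 0} Re (f (Tⁿ x)) = ∞`. -/
theorem convexHull_orbit_dense_iff
    {𝕜 : Type*} [RCLike 𝕜] {X : Type*} [AddCommGroup X] [Module 𝕜 X] [Module ℝ X]
    [IsScalarTower ℝ 𝕜 X] [TopologicalSpace X] [IsTopologicalAddGroup X]
    [ContinuousSMul 𝕜 X] [ContinuousSMul ℝ X] [LocallyConvexSpace ℝ X]
    (T : X →L[𝕜] X) (x : X) :
    Dense (convexHull ℝ (Set.range fun n : ℕ => (T ^ n) x)) ↔
      ∀ f : X →L[𝕜] 𝕜, f ≠ 0 → ∀ M : ℝ, ∃ n : ℕ, M < RCLike.re (f ((T ^ n) x)) :=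
  convexHull_orbit_dense_iff_general T x
end

section
/- Let T be a convex-cyclic operator on a real or complex locally convex space X and let c > 1 be a real number. Then cT is convex-cyclic; moreover, every convex-cyclic vector for T is also a convex-cyclic vector for cT. -/
/-!
Suppose the convex hull of the orbit of `x` under `cT` is not dense. Hahn–Banach gives a
continuous real functional `f` and `u` with `f < u` on that orbit and `u < f y` for some `y`.
Since `c ^ n ≥ 1`, `f (Tⁿ x) ≤ max u 0` for all `n`, so `f` is bounded above on a set whose
convex hull is dense, hence on all of `X`; a linear functional bounded above vanishes, which
contradicts `f (cᵐ Tᵐ x) < u < f y`.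
-/

open Set

theorem LinearMap.eq_zero_of_forall_le {R M : Type*} [Field R] [LinearOrder R]
    [IsStrictOrderedRing R] [AddCommGroup M] [Module R M] (f : M →ₗ[R] R) (C : R)
    (hf : ∀ z, f z ≤ C) : f = 0 := by
  have nonpos : ∀ z, f z ≤ 0 := by
    intro z
    by_contra! hz
    have := hf (((C + 1) / f z) • z)
    rw [map_smul, smul_eq_mul, div_mul_cancel₀ _ hz.ne'] at this
    linarith
  ext z
  have := nonpos (-z)
  rw [map_neg] at this
  exact le_antisymm (nonpos z) (by simpa using this)

theorem ContinuousLinearMap.eq_zero_of_bddAbove_of_dense_convexHull {X : Type*}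
    [AddCommGroup X] [Module ℝ X] [TopologicalSpace X] (f : X →L[ℝ] ℝ) {S : Set X}
    (hS : Dense (convexHull ℝ S)) (hf : BddAbove (f '' S)) : f = 0 := by
  obtain ⟨C, hC⟩ := hf
  have hull_le : convexHull ℝ S ⊆ f ⁻¹' Iic C :=
    convexHull_min (image_subset_iff.mp hC) ((convex_Iic C).linear_preimage (f : X →ₗ[ℝ] ℝ))
  have le_C : ∀ z, f z ≤ C := fun z =>
    closure_minimal hull_le (isClosed_Iic.preimage f.continuous) (hS z)
  exact ContinuousLinearMap.coe_injective ((f : X →ₗ[ℝ] ℝ).eq_zero_of_forall_le C le_C)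

theorem dense_convexHull_range_smul_of_one_le {ι X : Type*} [AddCommGroup X] [Module ℝ X]
    [TopologicalSpace X] [IsTopologicalAddGroup X] [ContinuousSMul ℝ X]
    [LocallyConvexSpace ℝ X] {v : ι → X} {r : ι → ℝ} (hr : ∀ i, 1 ≤ r i)
    (hv : Dense (convexHull ℝ (range v))) :
    Dense (convexHull ℝ (range fun i => r i • v i)) := by
  by_contra h
  obtain ⟨y, hy⟩ := not_forall.mp h
  obtain ⟨f, u, hfu, hyu⟩ :=
    geometric_hahn_banach_closed_point (convex_convexHull ℝ _).closure isClosed_closure hy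
  have lt_u : ∀ i, f (r i • v i) < u := fun i =>
    hfu _ (subset_closure (subset_convexHull ℝ _ ⟨i, rfl⟩))
  have bdd : BddAbove (f '' range v) := by
    refine ⟨max u 0, ?_⟩
    rintro _ ⟨_, ⟨i, rfl⟩, rfl⟩
    have := lt_u i
    rw [map_smul, smul_eq_mul] at this
    rcases le_or_gt (f (v i)) 0 with h0 | h0
    · exact le_max_of_le_right h0
    · exact le_max_of_le_left (by nlinarith [hr i])
  have hf0 := f.eq_zero_of_bddAbove_of_dense_convexHull hv bdd
  obtain ⟨_, i, -⟩ := convexHull_nonempty_iff.mp hv.nonempty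
  have := lt_u i
  simp only [hf0, zero_apply] at this hyu
  linarith

theorem ofReal_smul_pow_apply {𝕜 X : Type*} [RCLike 𝕜] [AddCommGroup X] [Module 𝕜 X]
    [Module ℝ X] [IsScalarTower ℝ 𝕜 X] [TopologicalSpace X] [IsTopologicalAddGroup X]
    [ContinuousConstSMul 𝕜 X] (T : X →L[𝕜] X) (c : ℝ) (n : ℕ) (x : X) :
    (((c : 𝕜) • T) ^ n) x = c ^ n • (T ^ n) x := by
  rw [smul_pow, smul_apply, ← RCLike.ofReal_pow, ← RCLike.real_smul_eq_coe_smul]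

/-- If `T` is a convex-cyclic operator on a (real or complex) locally convex space `X` and
`c > 1` is real, then `cT` is convex-cyclic; moreover every convex-cyclic vector for `T`
is a convex-cyclic vector for `cT`. -/
theorem smul_convexCyclic_of_convexCyclic
    {𝕜 : Type*} [RCLike 𝕜] {X : Type*} [AddCommGroup X] [Module 𝕜 X] [Module ℝ X]
    [IsScalarTower ℝ 𝕜 X] [TopologicalSpace X] [IsTopologicalAddGroup X]
    [ContinuousSMul 𝕜 X] [ContinuousSMul ℝ X] [LocallyConvexSpace ℝ X]
    (T : X →L[𝕜] X) (c : ℝ) (hc : 1 < c)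
    (hT : ∃ x : X, Dense (convexHull ℝ (Set.range fun n : ℕ => (T ^ n) x))) :
    (∃ x : X, Dense (convexHull ℝ (Set.range fun n : ℕ => (((c : 𝕜) • T) ^ n) x))) ∧
    ∀ x : X, Dense (convexHull ℝ (Set.range fun n : ℕ => (T ^ n) x)) →
      Dense (convexHull ℝ (Set.range fun n : ℕ => (((c : 𝕜) • T) ^ n) x)) := by
  have preserved : ∀ x : X, Dense (convexHull ℝ (range fun n : ℕ => (T ^ n) x)) →
      Dense (convexHull ℝ (range fun n : ℕ => (((c : 𝕜) • T) ^ n) x)) := fun x hx => by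
    simpa only [ofReal_smul_pow_apply] using
      dense_convexHull_range_smul_of_one_le (fun n => one_le_pow₀ hc.le) hx
  exact ⟨hT.imp preserved, preserved⟩
end

section
/- Let T be a bounded linear operator on a Banach space X. If T² is convex-cyclic with convex-cyclic vector x, then T ⊕ (−T) is convex-cyclic on X ⊕ X with convex-cyclic vector (x, x). -/
/-!
Let `C` be the convex hull of the `T²`-orbit of `x` and `G` that of the `(T ⊕ -T)`-orbit of
`(x, x)`. Even powers give `(a, a) ∈ G` and odd powers give `(T b, -T b) ∈ G` for `a, b ∈ C`, so by
convexity `G` contains the midpoints `((a + T b) / 2, (a - T b) / 2)`. Now `C` is dense, and so is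
`T '' C`, because `T` has dense range: otherwise a Hahn–Banach functional vanishing on `range T`,
which contains the orbit except `x`, would be bounded above on the dense set `C`. As
`(a, c) ↦ ((a + c) / 2, (a - c) / 2)` is a continuous surjection of `X × X`, these midpoints are
dense.
-/

open Set

theorem LinearMap.eq_zero_of_bddAbove_image_submodule {E : Type*} [AddCommGroup E] [Module ℝ E]
    (f : E →ₗ[ℝ] ℝ) (V : Submodule ℝ E) (hf : BddAbove (f '' V)) {v : E} (hv : v ∈ V) :
    f v = 0 := by
  rcases Ideal.eq_bot_or_top (V.map f) with hbot | htop
  · exact (Submodule.eq_bot_iff _).mp hbot (f v) (Submodule.mem_map_of_mem hv)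
  · refine absurd ?_ (not_bddAbove_univ (α := ℝ))
    rwa [← Submodule.map_coe, htop, Submodule.top_coe] at hf

theorem Submodule.dense_of_dense_convexHull_insert {E : Type*} [AddCommGroup E] [Module ℝ E]
    [TopologicalSpace E] [IsTopologicalAddGroup E] [ContinuousSMul ℝ E] [LocallyConvexSpace ℝ E]
    (V : Submodule ℝ E) (x : E) (h : Dense (convexHull ℝ (insert x (V : Set E)))) :
    Dense (V : Set E) := by
  by_contra hV
  obtain ⟨p, hp⟩ : ∃ p, p ∉ closure (V : Set E) := by simpa [Dense] using hV
  obtain ⟨f, u, hfV, hup⟩ :=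
    geometric_hahn_banach_closed_point V.convex.closure isClosed_closure hp
  have hf0 : ∀ v ∈ V, f v = 0 := fun v ↦ (f : E →ₗ[ℝ] ℝ).eq_zero_of_bddAbove_image_submodule V
    ⟨u, by rintro _ ⟨w, hw, rfl⟩; exact (hfV w (subset_closure hw)).le⟩
  have hbdd : ∀ y, f y ≤ max (f x) 0 := by
    have hsub : convexHull ℝ (insert x (V : Set E)) ⊆ {y | f y ≤ max (f x) 0} := by
      refine convexHull_min (insert_subset (le_max_left (f x) 0) fun v hv ↦ ?_)
        (convex_halfSpace_le f.isLinear _)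
      simp [hf0 v hv]
    intro y
    exact closure_minimal hsub (isClosed_le f.continuous continuous_const) (h y)
  have hfp : f p = 0 := (f : E →ₗ[ℝ] ℝ).eq_zero_of_bddAbove_image_submodule ⊤
    ⟨_, by rintro _ ⟨w, -, rfl⟩; exact hbdd w⟩ Submodule.mem_top
  have hu : f 0 < u := hfV 0 (subset_closure V.zero_mem)
  rw [map_zero] at hu
  linarith

theorem ContinuousLinearMap.denseRange_of_dense_convexHull_orbit {R E : Type*} [Semiring R]
    [AddCommGroup E] [Module R E] [Module ℝ E] [TopologicalSpace E] [IsTopologicalAddGroup E]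
    [ContinuousSMul ℝ E] [LocallyConvexSpace ℝ E] [T2Space E] (S : E →L[R] E) (x : E)
    (h : Dense (convexHull ℝ (range fun n : ℕ ↦ (S ^ n) x))) : DenseRange S := by
  let Sℝ : E →L[ℝ] E := (S : E →+ E).toRealLinearMap S.continuous
  refine (LinearMap.range (Sℝ : E →ₗ[ℝ] E)).dense_of_dense_convexHull_insert x
    (h.mono (convexHull_mono ?_))
  rintro _ ⟨_ | n, rfl⟩
  · exact mem_insert _ _
  · refine Or.inr ⟨(S ^ n) x, ?_⟩
    change S ((S ^ n) x) = (S ^ (n + 1)) x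
    rw [pow_succ', mul_apply_eq_comp]

theorem Dense.image2_midpoint_diag_antidiag {E : Type*} [AddCommGroup E] [Module ℝ E]
    [TopologicalSpace E] [IsTopologicalAddGroup E] [ContinuousSMul ℝ E] {s t : Set E}
    (hs : Dense s) (ht : Dense t) :
    Dense (image2 (fun a b ↦ midpoint ℝ (a, a) (b, -b)) s t) := by
  rw [← image_prod]
  have hsurj : Function.Surjective fun p : E × E ↦ midpoint ℝ (p.1, p.1) (p.2, -p.2) := by
    rintro ⟨u, v⟩
    refine ⟨(u + v, u - v), Prod.ext (midpoint_add_sub ℝ u v) ?_⟩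
    change midpoint ℝ (u + v) (-(u - v)) = v
    rw [neg_sub, add_comm, midpoint_add_sub]
  have hcont : Continuous fun p : E × E ↦ midpoint ℝ (p.1, p.1) (p.2, -p.2) := by
    simp only [midpoint_eq_smul_add]
    fun_prop
  exact hsurj.denseRange.dense_image hcont (hs.prod ht)

theorem LinearMap.mapsTo_convexHull {𝕜 E F : Type*} [Semiring 𝕜] [PartialOrder 𝕜]
    [AddCommMonoid E] [Module 𝕜 E] [AddCommMonoid F] [Module 𝕜 F]
    (f : E →ₗ[𝕜] F) {s : Set E} {t : Set F} (h : MapsTo f s t) :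
    MapsTo f (convexHull 𝕜 s) (convexHull 𝕜 t) := by
  rw [mapsTo_iff_image_subset, f.image_convexHull]
  exact convexHull_mono h.image_subset

theorem ContinuousLinearMap.prodMap_pow {R M N : Type*} [Semiring R] [TopologicalSpace M]
    [TopologicalSpace N] [AddCommMonoid M] [AddCommMonoid N] [Module R M] [Module R N]
    (T : M →L[R] M) (S : N →L[R] N) (n : ℕ) :
    T.prodMap S ^ n = (T ^ n).prodMap (S ^ n) := by
  induction n with
  | zero => ext <;> simp
  | succ n ih => ext <;> simp [pow_succ', ih]

section ProdMapNeg

variable {R M : Type*} [Ring R] [TopologicalSpace M] [AddCommGroup M] [Module R M]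
  [IsTopologicalAddGroup M] (T : M →L[R] M) (x : M) (m : ℕ)

theorem ContinuousLinearMap.prodMap_neg_pow_two_mul_apply :
    (T.prodMap (-T) ^ (2 * m)) (x, x) = (((T ^ 2) ^ m) x, ((T ^ 2) ^ m) x) := by
  rw [T.prodMap_pow, (even_two_mul m).neg_pow, pow_mul]
  rfl

theorem ContinuousLinearMap.prodMap_neg_pow_two_mul_add_one_apply :
    (T.prodMap (-T) ^ (2 * m + 1)) (x, x) = (T (((T ^ 2) ^ m) x), -T (((T ^ 2) ^ m) x)) := by
  rw [T.prodMap_pow, (odd_two_mul_add_one m).neg_pow, pow_succ', pow_mul]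
  rfl

end ProdMapNeg

theorem prod_neg_convexCyclic_of_sq_convexCyclic_general
    {𝕜 : Type*} [RCLike 𝕜] {X : Type*} [NormedAddCommGroup X] [NormedSpace 𝕜 X]
    [NormedSpace ℝ X]
    (T : X →L[𝕜] X) (x : X)
    (hx : Dense (convexHull ℝ (Set.range fun n : ℕ => ((T ^ 2) ^ n) x))) :
    Dense (convexHull ℝ (Set.range fun n : ℕ => ((T.prodMap (-T)) ^ n) (x, x))) := by
  set C := convexHull ℝ (range fun n : ℕ => ((T ^ 2) ^ n) x)
  set G := convexHull ℝ (range fun n : ℕ => ((T.prodMap (-T)) ^ n) (x, x))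
  have hT : DenseRange T :=
    ((T ^ 2).denseRange_of_dense_convexHull_orbit x hx).mono <| by
      rintro _ ⟨y, rfl⟩
      exact ⟨T y, by rw [sq, mul_apply_eq_comp]⟩
  have hdiag : ∀ a ∈ C, (a, a) ∈ G := by
    intro a ha
    refine (LinearMap.id.prod LinearMap.id : X →ₗ[ℝ] X × X).mapsTo_convexHull ?_ ha
    rintro _ ⟨m, rfl⟩
    exact ⟨2 * m, T.prodMap_neg_pow_two_mul_apply x m⟩
  have hanti : ∀ b ∈ T '' C, (b, -b) ∈ G := by
    rintro _ ⟨c, hc, rfl⟩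
    let Tℝ : X →L[ℝ] X := (T : X →+ X).toRealLinearMap T.continuous
    refine ((Tℝ : X →ₗ[ℝ] X).prod (-Tℝ : X →ₗ[ℝ] X)).mapsTo_convexHull ?_ hc
    rintro _ ⟨m, rfl⟩
    exact ⟨2 * m + 1, T.prodMap_neg_pow_two_mul_add_one_apply x m⟩
  refine (hx.image2_midpoint_diag_antidiag (hT.dense_image T.continuous hx)).mono ?_
  rintro _ ⟨a, ha, b, hb, rfl⟩
  exact (convex_convexHull ℝ _).midpoint_mem (hdiag a ha) (hanti b hb)

/-- If `T²` is convex-cyclic on a Banach space `X` with convex-cyclic vector `x`, then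
`T ⊕ (-T)` is convex-cyclic on `X ⊕ X` with convex-cyclic vector `(x, x)`. -/
theorem prod_neg_convexCyclic_of_sq_convexCyclic
    {𝕜 : Type*} [RCLike 𝕜] {X : Type*} [NormedAddCommGroup X] [NormedSpace 𝕜 X]
    [NormedSpace ℝ X] [IsScalarTower ℝ 𝕜 X] [CompleteSpace X]
    (T : X →L[𝕜] X) (x : X)
    (hx : Dense (convexHull ℝ (Set.range fun n : ℕ => ((T ^ 2) ^ n) x))) :
    Dense (convexHull ℝ (Set.range fun n : ℕ => ((T.prodMap (-T)) ^ n) (x, x))) :=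
  prod_neg_convexCyclic_of_sq_convexCyclic_general T x hx
end

section
/- If T is a convex-cyclic bounded linear operator on a nonzero Banach space X, then ‖T‖ > 1. -/
/-- A convex-cyclic bounded linear operator `T` on a nonzero (real or complex) Banach space
satisfies `‖T‖ > 1`. -/
theorem one_lt_norm_of_convexCyclic
    {𝕜 : Type*} [RCLike 𝕜] {X : Type*} [NormedAddCommGroup X] [NormedSpace 𝕜 X]
    [NormedSpace ℝ X] [IsScalarTower ℝ 𝕜 X] [CompleteSpace X] [Nontrivial X]
    (T : X →L[𝕜] X)
    (hT : ∃ x : X, Dense (convexHull ℝ (Set.range fun n : ℕ => (T ^ n) x))) :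
    1 < ‖T‖ := by
  by_contra h
  push_neg at h
  obtain ⟨x, hx⟩ := hT
  have hsub : Set.range (fun n : ℕ => (T ^ n) x) ⊆ Metric.closedBall (0 : X) ‖x‖ := by
    rintro y ⟨n, rfl⟩
    simp only [Metric.mem_closedBall, dist_zero_right]
    calc ‖(T ^ n) x‖ ≤ ‖T ^ n‖ * ‖x‖ := (T ^ n).le_opNorm x
      _ ≤ ‖T‖ ^ n * ‖x‖ := by
          gcongr
          exact norm_pow_le T n
      _ ≤ 1 * ‖x‖ := by
          gcongr
          exact pow_le_one₀ (norm_nonneg T) h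
      _ = ‖x‖ := one_mul _
  have hhull : convexHull ℝ (Set.range fun n : ℕ => (T ^ n) x) ⊆ Metric.closedBall 0 ‖x‖ :=
    convexHull_min hsub (convex_closedBall 0 ‖x‖)
  obtain ⟨y, hy⟩ := NormedSpace.exists_lt_norm ℝ X ‖x‖
  have : y ∈ Metric.closedBall (0 : X) ‖x‖ := by
    have := hx.closure_eq ▸ Set.mem_univ y
    have hy' : y ∈ closure (convexHull ℝ (Set.range fun n : ℕ => (T ^ n) x)) := by
      rw [hx.closure_eq]; trivial
    exact (Metric.isClosed_closedBall.closure_subset_iff.mpr hhull) hy'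
  simp only [Metric.mem_closedBall, dist_zero_right] at this
  exact absurd this (not_le.mpr hy)
end

section
/- If T is a convex-cyclic bounded linear operator on a complex Banach space, then every eigenvalue λ of the adjoint T* satisfies |λ| > 1 and Im(λ) ≠ 0. -/
/-!
Applying `f` to the orbit of a convex-cyclic vector `x` gives the sequence `λⁿ f(x)`, and since
`f` is a continuous surjection commuting with convex hulls, its convex hull is dense in `ℂ`.
If `|λ| ≤ 1` this sequence is bounded, and if `λ` is real it lies on the real line `ℝ f(x)`;
in either case its convex hull cannot be dense.
-/

open Set

theorem ContinuousLinearMap.apply_pow_apply_of_comp_eq_smul {R M : Type*} [CommSemiring R]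
    [TopologicalSpace R] [ContinuousMul R] [TopologicalSpace M] [AddCommMonoid M]
    [Module R M] {T : M →L[R] M} {f : M →L[R] R} {lam : R} (h : f.comp T = lam • f)
    (n : ℕ) (x : M) : f ((T ^ n) x) = lam ^ n * f x := by
  induction n with
  | zero => simp
  | succ n ih =>
    rw [pow_succ', mul_apply_eq_comp, ← ContinuousLinearMap.comp_apply, h,
      smul_apply, ih, smul_eq_mul, pow_succ', mul_assoc]

theorem Dense.convexHull_image {E F : Type*} [AddCommMonoid E] [Module ℝ E] [TopologicalSpace E]
    [AddCommMonoid F] [Module ℝ F] [TopologicalSpace F] {f : E →ₗ[ℝ] F} (hf : Continuous f)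
    (hfr : DenseRange f) {s : Set E} (hs : Dense (convexHull ℝ s)) :
    Dense (convexHull ℝ (f '' s)) := by
  rw [← f.image_convexHull]
  exact hfr.dense_image hf hs

theorem Bornology.IsBounded.not_dense {𝕜 E : Type*} [NontriviallyNormedField 𝕜]
    [NormedAddCommGroup E] [NormedSpace 𝕜 E] [Nontrivial E] {s : Set E}
    (hs : Bornology.IsBounded s) : ¬Dense s := fun hd =>
  NormedSpace.unbounded_univ 𝕜 E (hd.closure_eq ▸ hs.closure)

theorem not_dense_convexHull_of_subset_submodule {E : Type*} [AddCommMonoid E] [Module ℝ E]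
    [TopologicalSpace E] {p : Submodule ℝ E} (hp : p ≠ ⊤) (hpc : IsClosed (p : Set E))
    {s : Set E} (hs : s ⊆ p) : ¬Dense (convexHull ℝ s) := fun hd =>
  hp <| Submodule.eq_top_iff'.2 fun x =>
    hpc.closure_subset_iff.2 (convexHull_min hs p.convex) (hd x)

theorem Complex.span_real_singleton_ne_top (c : ℂ) : Submodule.span ℝ {c} ≠ ⊤ := by
  intro h
  have hrank := finrank_span_le_card (R := ℝ) ({c} : Set ℂ)
  rw [h, finrank_top, Complex.finrank_real_complex] at hrank
  simp at hrank

section PowMul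

variable {lam c : ℂ}

theorem one_lt_norm_of_dense_convexHull_range_pow_mul
    (h : Dense (convexHull ℝ (range fun n : ℕ => lam ^ n * c))) : 1 < ‖lam‖ := by
  by_contra! hle
  have hbdd : Bornology.IsBounded (range fun n : ℕ => lam ^ n * c) := by
    refine isBounded_iff_forall_norm_le.2 ⟨‖c‖, ?_⟩
    rintro - ⟨n, rfl⟩
    rw [norm_mul, norm_pow]
    exact mul_le_of_le_one_left (norm_nonneg c) (pow_le_one₀ (norm_nonneg lam) hle)
  exact (isBounded_convexHull.2 hbdd).not_dense (𝕜 := ℂ) h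

theorem im_ne_zero_of_dense_convexHull_range_pow_mul
    (h : Dense (convexHull ℝ (range fun n : ℕ => lam ^ n * c))) : lam.im ≠ 0 := by
  intro him
  refine not_dense_convexHull_of_subset_submodule (Complex.span_real_singleton_ne_top c)
    (Submodule.closed_of_finiteDimensional _) ?_ h
  rintro - ⟨n, rfl⟩
  have hlam : lam = (lam.re : ℂ) := Complex.ext rfl (by simp [him])
  change lam ^ n * c ∈ Submodule.span ℝ {c}
  rw [hlam, ← Complex.ofReal_pow, ← Complex.real_smul]
  exact Submodule.smul_mem _ _ (Submodule.mem_span_singleton_self c)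

end PowMul

theorem eigenvalue_adjoint_of_convexCyclic_general
    {X : Type*} [NormedAddCommGroup X] [NormedSpace ℂ X]
    (T : X →L[ℂ] X)
    (hT : ∃ x : X, Dense (convexHull ℝ (Set.range fun n : ℕ => (T ^ n) x)))
    (lam : ℂ) (f : X →L[ℂ] ℂ) (hf : f ≠ 0) (heig : f.comp T = lam • f) :
    1 < ‖lam‖ ∧ lam.im ≠ 0 := by
  obtain ⟨x, hx⟩ := hT
  have hsurj : Function.Surjective f :=
    LinearMap.surjective (ContinuousLinearMap.coe_injective.ne hf : (f : X →ₗ[ℂ] ℂ) ≠ 0)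
  have hdense : Dense (convexHull ℝ (range fun n : ℕ => lam ^ n * f x)) := by
    have := hx.convexHull_image (f := (f : X →ₗ[ℂ] ℂ).restrictScalars ℝ) f.continuous
      hsurj.denseRange
    rw [← range_comp] at this
    simpa only [Function.comp_def, LinearMap.coe_restrictScalars, ContinuousLinearMap.coe_coe,
      ContinuousLinearMap.apply_pow_apply_of_comp_eq_smul heig] using this
  exact ⟨one_lt_norm_of_dense_convexHull_range_pow_mul hdense,
    im_ne_zero_of_dense_convexHull_range_pow_mul hdense⟩

/-- If `T` is a convex-cyclic bounded linear operator on a complex Banach space, then every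
eigenvalue `λ` of the adjoint `T*` (i.e. `f ∘ T = λ f` for some nonzero continuous linear
functional `f`) satisfies `|λ| > 1` and `Im λ ≠ 0`. -/
theorem eigenvalue_adjoint_of_convexCyclic
    {X : Type*} [NormedAddCommGroup X] [NormedSpace ℂ X] [CompleteSpace X]
    (T : X →L[ℂ] X)
    (hT : ∃ x : X, Dense (convexHull ℝ (Set.range fun n : ℕ => (T ^ n) x)))
    (lam : ℂ) (f : X →L[ℂ] ℂ) (hf : f ≠ 0) (heig : f.comp T = lam • f) :
    1 < ‖lam‖ ∧ lam.im ≠ 0 :=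
  eigenvalue_adjoint_of_convexCyclic_general T hT lam f hf heig
end

section
/- An m-isometry on a Banach space is not convex-cyclic. -/
/-!
For `z : X` let `a_z n = ‖Tⁿ z‖ ^ p`. The `(m,p)`-isometry identity says `Δ^m a_z = 0`, so `a_z` is
a polynomial in `n` of degree `< m`, and `c z := Δ^(m-1) a_z 0 = lim a_z n / C(n, m-1)` is `≥ 0`
and invariant under `T`. Since `c z ^ (1/p) = lim ‖Tⁿ z‖ / C(n, m-1) ^ (1/p)` is a pointwise limit of
seminorms, it is a continuous seminorm, constant on every orbit. If the convex hull of the orbit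
of `x` were dense, this seminorm would be bounded on all of `X`, hence zero; then `T` would be an
`(m-1,p)`-isometry, and descending to `m = 0` gives `‖z‖ ^ p = 0` for all `z`.
-/

open Filter Finset Function Topology Asymptotics fwdDiff

lemma fwdDiff_iter_eq_zero_of_le {M G : Type*} [AddCommMonoid M] [AddCommGroup G] {h : M}
    {f : M → G} {d k : ℕ} (hf : Δ_[h] ^[d] f = 0) (hk : d ≤ k) :
    Δ_[h] ^[k] f = 0 := by
  obtain ⟨j, rfl⟩ := Nat.exists_eq_add_of_le hk
  rw [add_comm, iterate_add_apply, hf]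
  exact iterate_fixed (funext fun _ => sub_self 0) j

lemma eq_apply_zero_of_fwdDiff_eq_zero {G : Type*} [AddCommGroup G] {f : ℕ → G}
    (hf : Δ_[1] f = 0) (n : ℕ) : f n = f 0 := by
  induction n with
  | zero => rfl
  | succ n ih => rw [← ih, ← sub_eq_zero]; exact congrFun hf n

lemma eq_sum_choose_smul_fwdDiff_iter {G : Type*} [AddCommGroup G] {f : ℕ → G} {d : ℕ}
    (hf : Δ_[1] ^[d + 1] f = 0) (n : ℕ) :
    f n = ∑ k ∈ range (d + 1), n.choose k • Δ_[1] ^[k] f 0 := by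
  have newton := shift_eq_sum_fwdDiff_iter 1 f n 0
  rw [zero_add, smul_eq_mul, mul_one] at newton
  rw [newton]
  rcases le_total (d + 1) (n + 1) with hle | hle
  · refine (sum_subset (range_subset_range.2 hle) fun k _ hk => ?_).symm
    rw [fwdDiff_iter_eq_zero_of_le hf (by simpa using hk), Pi.zero_apply, smul_zero]
  · refine sum_subset (range_subset_range.2 hle) fun k _ hk => ?_
    rw [Nat.choose_eq_zero_of_lt (by simpa using hk), zero_smul]

lemma tendsto_choose_div_choose_atTop {k d : ℕ} (hkd : k < d) :
    Tendsto (fun n : ℕ => (n.choose k : ℝ) / n.choose d) atTop (𝓝 0) :=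
  ((isTheta_choose k).trans_isLittleO
    (((isLittleO_pow_pow_atTop_of_lt hkd).comp_tendsto tendsto_natCast_atTop_atTop).trans_isTheta
      (isTheta_choose d).symm)).tendsto_div_nhds_zero

lemma tendsto_div_choose_of_fwdDiff_iter_eq_zero {f : ℕ → ℝ} {d : ℕ}
    (hf : Δ_[1] ^[d + 1] f = 0) :
    Tendsto (fun n => f n / n.choose d) atTop (𝓝 (Δ_[1] ^[d] f 0)) := by
  have lower : Tendsto (fun n : ℕ => ∑ k ∈ range d, (n.choose k : ℝ) / n.choose d * Δ_[1] ^[k] f 0)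
      atTop (𝓝 0) := by
    simpa using tendsto_finsetSum _ fun k hk =>
      (tendsto_choose_div_choose_atTop (mem_range.1 hk)).mul_const (Δ_[1] ^[k] f 0)
  have top : Tendsto (fun n : ℕ => (n.choose d : ℝ) / n.choose d * Δ_[1] ^[d] f 0)
      atTop (𝓝 (Δ_[1] ^[d] f 0)) := by
    refine tendsto_const_nhds.congr' ?_
    filter_upwards [eventually_ge_atTop d] with n hn
    rw [div_self (Nat.cast_ne_zero.2 (Nat.choose_pos hn).ne'), one_mul]
  simpa [eq_sum_choose_smul_fwdDiff_iter hf, sum_range_succ, add_div, sum_div, div_mul_eq_mul_div]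
    using lower.add top

lemma fwdDiff_iter_apply_zero_nonneg {f : ℕ → ℝ} {d : ℕ} (hf : Δ_[1] ^[d + 1] f = 0)
    (hf_nonneg : 0 ≤ f) : 0 ≤ Δ_[1] ^[d] f 0 :=
  ge_of_tendsto' (tendsto_div_choose_of_fwdDiff_iter_eq_zero hf) fun n =>
    div_nonneg (hf_nonneg n) (n.choose d).cast_nonneg

namespace Seminorm

def ofTendsto {𝕜 E ι : Type*} [NormedField 𝕜] [AddCommGroup E] [Module 𝕜 E] {l : Filter ι}
    [l.NeBot] (q : ι → Seminorm 𝕜 E) (f : E → ℝ) (hf : ∀ x, Tendsto (fun i => q i x) l (𝓝 (f x))) :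
    Seminorm 𝕜 E :=
  Seminorm.of f
    (fun x y => le_of_tendsto_of_tendsto' (hf (x + y)) ((hf x).add (hf y)) fun i =>
      map_add_le_add (q i) x y)
    (fun a x => tendsto_nhds_unique (hf (a • x)) (by
      simpa only [map_smul_eq_mul] using (hf x).const_mul ‖a‖))

lemma eq_zero_of_bddAbove_of_dense_convexHull {E : Type*} [AddCommGroup E] [Module ℝ E]
    [TopologicalSpace E] {q : Seminorm ℝ E} (hq : Continuous q) {s : Set E}
    (hs : Dense (convexHull ℝ s)) (hbdd : BddAbove (q '' s)) : q = 0 := by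
  obtain ⟨r, hr⟩ := hbdd
  have ball_eq_univ : q.closedBall 0 r = Set.univ := by
    have hclosed : IsClosed (q.closedBall 0 r) := by
      rw [closedBall_zero_eq]; exact isClosed_le hq continuous_const
    refine Set.eq_univ_of_univ_subset (hs.closure_eq ▸ closure_minimal ?_ hclosed)
    exact convexHull_min (fun x hx => (mem_closedBall_zero q).2 (hr ⟨x, hx, rfl⟩))
      (convex_closedBall q 0 r)
  ext z
  by_contra hz
  have hpos : 0 < q z := lt_of_le_of_ne (apply_nonneg q z) (Ne.symm hz)
  obtain ⟨n, hn⟩ := exists_nat_gt (r / q z)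
  have hle : q ((n : ℝ) • z) ≤ r := (mem_closedBall_zero q).1 (ball_eq_univ ▸ Set.mem_univ _)
  rw [map_smul_eq_mul, Real.norm_natCast] at hle
  exact (div_lt_iff₀ hpos).1 hn |>.not_ge hle

end Seminorm

section Orbit

variable {X : Type*} [NormedAddCommGroup X] [NormedSpace ℝ X] (T : X →L[ℝ] X) (p : ℝ)

/-- `T` is an `(m,p)`-isometry iff `Δ_[1] ^[m] (orbitNormRpow T p z) 0 = 0` for every `z`. -/
noncomputable def orbitNormRpow (z : X) (n : ℕ) : ℝ := ‖(T ^ n) z‖ ^ p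

lemma orbitNormRpow_pow_apply (k : ℕ) (z : X) :
    orbitNormRpow T p ((T ^ k) z) = fun n => orbitNormRpow T p z (n + k) := by
  ext n
  rw [orbitNormRpow, orbitNormRpow, pow_add]
  rfl

lemma fwdDiff_iter_orbitNormRpow_zero (m : ℕ) (z : X) :
    Δ_[1] ^[m] (orbitNormRpow T p z) 0 =
      ∑ k ∈ range (m + 1), (-1 : ℝ) ^ (m - k) * (m.choose k : ℝ) * ‖(T ^ k) z‖ ^ p := by
  simp [fwdDiff_iter_eq_sum_shift, orbitNormRpow]

variable {T p}

lemma continuous_fwdDiff_iter_orbitNormRpow_zero (hp : 0 ≤ p) (m : ℕ) :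
    Continuous fun z => Δ_[1] ^[m] (orbitNormRpow T p z) 0 := by
  simp_rw [fwdDiff_iter_orbitNormRpow_zero]
  exact continuous_finsetSum _ fun k _ =>
    continuous_const.mul ((T ^ k).continuous.norm.rpow_const fun _ => Or.inr hp)

lemma fwdDiff_iter_orbitNormRpow_eq_zero {m : ℕ}
    (h : ∀ z, Δ_[1] ^[m] (orbitNormRpow T p z) 0 = 0) (z : X) :
    Δ_[1] ^[m] (orbitNormRpow T p z) = 0 := by
  ext n
  rw [← zero_add n, ← fwdDiff_iter_comp_add, ← orbitNormRpow_pow_apply]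
  exact h ((T ^ n) z)

lemma tendsto_norm_pow_div_choose_rpow (hp : 0 < p) {d : ℕ}
    (h : ∀ z, Δ_[1] ^[d + 1] (orbitNormRpow T p z) 0 = 0) (z : X) :
    Tendsto (fun n : ℕ => ‖(T ^ n) z‖ / (n.choose d : ℝ) ^ p⁻¹) atTop
      (𝓝 ((Δ_[1] ^[d] (orbitNormRpow T p z) 0) ^ p⁻¹)) := by
  refine ((tendsto_div_choose_of_fwdDiff_iter_eq_zero
    (fwdDiff_iter_orbitNormRpow_eq_zero h z)).rpow_const (Or.inr (inv_nonneg.2 hp.le))).congr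
    fun n => ?_
  rw [orbitNormRpow, Real.div_rpow (by positivity) (by positivity), ← Real.rpow_mul (norm_nonneg _),
    mul_inv_cancel₀ hp.ne', Real.rpow_one]

lemma fwdDiff_iter_orbitNormRpow_eq_zero_of_dense_convexHull (hp : 0 < p) {d : ℕ}
    (h : ∀ z, Δ_[1] ^[d + 1] (orbitNormRpow T p z) 0 = 0) {x : X}
    (hx : Dense (convexHull ℝ (Set.range fun n : ℕ => (T ^ n) x))) (z : X) :
    Δ_[1] ^[d] (orbitNormRpow T p z) 0 = 0 := by
  set c : X → ℝ := fun z => Δ_[1] ^[d] (orbitNormRpow T p z) 0 with hc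
  have hc_nonneg (z : X) : 0 ≤ c z :=
    fwdDiff_iter_apply_zero_nonneg (fwdDiff_iter_orbitNormRpow_eq_zero h z) fun n => by
      simp only [orbitNormRpow, Pi.zero_apply]; positivity
  have hc_orbit (n : ℕ) : c ((T ^ n) x) = c x := by
    simp only [hc, orbitNormRpow_pow_apply, fwdDiff_iter_comp_add, zero_add]
    refine eq_apply_zero_of_fwdDiff_eq_zero ?_ n
    rw [← iterate_succ_apply' (Δ_[1])]
    exact fwdDiff_iter_orbitNormRpow_eq_zero h x
  let q (n : ℕ) : Seminorm ℝ X :=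
    ((n.choose d : NNReal) ^ p⁻¹)⁻¹ • (normSeminorm ℝ X).comp (T ^ n : X →L[ℝ] X).toLinearMap
  have hq (n : ℕ) (z : X) : q n z = ‖(T ^ n) z‖ / (n.choose d : ℝ) ^ p⁻¹ := by
    simp only [q, smul_apply, Seminorm.comp_apply, coe_normSeminorm,
      ContinuousLinearMap.coe_coe, NNReal.smul_def, smul_eq_mul, NNReal.coe_inv, NNReal.coe_rpow,
      NNReal.coe_natCast, div_eq_inv_mul]
  let g : Seminorm ℝ X := Seminorm.ofTendsto q (fun z => c z ^ p⁻¹) fun z => by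
    simpa only [hq] using tendsto_norm_pow_div_choose_rpow hp h z
  have hg : g = 0 := by
    refine g.eq_zero_of_bddAbove_of_dense_convexHull ?_ hx ⟨c x ^ p⁻¹, ?_⟩
    · exact (continuous_fwdDiff_iter_orbitNormRpow_zero hp.le d).rpow_const fun _ =>
        Or.inr (inv_nonneg.2 hp.le)
    · rintro _ ⟨_, ⟨n, rfl⟩, rfl⟩
      exact (congrArg (· ^ p⁻¹) (hc_orbit n)).le
  exact (Real.rpow_eq_zero (hc_nonneg z) (inv_ne_zero hp.ne')).1 congr($hg z)

lemma exists_fwdDiff_iter_orbitNormRpow_ne_zero_of_dense_convexHull [Nontrivial X]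
    (hp : 0 < p) {x : X} (hx : Dense (convexHull ℝ (Set.range fun n : ℕ => (T ^ n) x))) (m : ℕ) :
    ∃ z, Δ_[1] ^[m] (orbitNormRpow T p z) 0 ≠ 0 := by
  induction m with
  | zero =>
    obtain ⟨z, hz⟩ := exists_ne (0 : X)
    refine ⟨z, ?_⟩
    simpa [orbitNormRpow, Real.rpow_eq_zero (norm_nonneg z) hp.ne'] using hz
  | succ d ih =>
    contrapose! ih
    exact fwdDiff_iter_orbitNormRpow_eq_zero_of_dense_convexHull hp ih hx

end Orbit

theorem m_isometry_not_convexCyclic_general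
    {𝕜 : Type*} [RCLike 𝕜] {X : Type*} [NormedAddCommGroup X] [NormedSpace 𝕜 X]
    [NormedSpace ℝ X] [IsScalarTower ℝ 𝕜 X] [Nontrivial X]
    (T : X →L[𝕜] X) (m : ℕ) (p : ℝ) (hp : 0 < p)
    (hiso : ∀ x : X,
      ∑ k ∈ Finset.range (m + 1),
        (-1 : ℝ) ^ (m - k) * (m.choose k : ℝ) * ‖(T ^ k) x‖ ^ p = 0) :
    ¬ ∃ x : X, Dense (convexHull ℝ (Set.range fun n : ℕ => (T ^ n) x)) := by
  rintro ⟨x, hx⟩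
  have hpow (n : ℕ) : ⇑(T.restrictScalars ℝ ^ n) = ⇑(T ^ n) := by
    rw [FunLike.coe_pow_eq_iterate, FunLike.coe_pow_eq_iterate]; rfl
  obtain ⟨z, hz⟩ := exists_fwdDiff_iter_orbitNormRpow_ne_zero_of_dense_convexHull hp
    (T := T.restrictScalars ℝ) (by simpa only [hpow] using hx) m
  exact hz (by simpa only [fwdDiff_iter_orbitNormRpow_zero, hpow] using hiso z)

/-- An `m`-isometry (a strict `(m,p)`-isometry for some `p > 0`, `m ≥ 1`) on a nonzero
(real or complex) Banach space is not convex-cyclic. -/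
theorem m_isometry_not_convexCyclic
    {𝕜 : Type*} [RCLike 𝕜] {X : Type*} [NormedAddCommGroup X] [NormedSpace 𝕜 X]
    [NormedSpace ℝ X] [IsScalarTower ℝ 𝕜 X] [CompleteSpace X] [Nontrivial X]
    (T : X →L[𝕜] X) (m : ℕ) (hm : 1 ≤ m) (p : ℝ) (hp : 0 < p)
    (hiso : ∀ x : X,
      ∑ k ∈ Finset.range (m + 1),
        (-1 : ℝ) ^ (m - k) * (m.choose k : ℝ) * ‖(T ^ k) x‖ ^ p = 0) :
    ¬ ∃ x : X, Dense (convexHull ℝ (Set.range fun n : ℕ => (T ^ n) x)) :=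
  m_isometry_not_convexCyclic_general T m p hp hiso
end

section
/- Every ε-hypercyclic vector for a bounded linear operator T on a Banach space is a convex-cyclic vector for T. In particular, every ε-hypercyclic operator is convex-cyclic. -/
/-- Every `ε`-hypercyclic vector (with `ε ∈ (0,1)`) for a bounded linear operator `T` on a
(real or complex) Banach space is a convex-cyclic vector for `T`; in particular every
`ε`-hypercyclic operator is convex-cyclic. -/
theorem epsHypercyclic_vector_is_convexCyclic
    {𝕜 : Type*} [RCLike 𝕜] {X : Type*} [NormedAddCommGroup X] [NormedSpace 𝕜 X]
    [NormedSpace ℝ X] [IsScalarTower ℝ 𝕜 X] [CompleteSpace X]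
    (T : X →L[𝕜] X) (ε : ℝ) (hε : ε ∈ Set.Ioo (0 : ℝ) 1) (x : X)
    (hx : ∀ y : X, y ≠ 0 → ∃ n : ℕ, ‖(T ^ n) x - y‖ ≤ ε * ‖y‖) :
    Dense (convexHull ℝ (Set.range fun n : ℕ => (T ^ n) x)) ∧
      ∃ z : X, Dense (convexHull ℝ (Set.range fun n : ℕ => (T ^ n) z)) := by
  obtain ⟨hε0, hε1⟩ := hε
  set C := convexHull ℝ (Set.range fun n : ℕ => (T ^ n) x) with hCdef
  have horb : ∀ n : ℕ, (T ^ n) x ∈ C := fun n => subset_convexHull _ _ ⟨n, rfl⟩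
  have hxC : x ∈ C := by simpa using horb 0
  have hne : C.Nonempty := ⟨x, hxC⟩
  have hconv : Convex ℝ C := convex_convexHull _ _
  have key : ∀ y : X, Metric.infDist y C = 0 := by
    intro y
    by_contra hd
    have hd0 : 0 < Metric.infDist y C :=
      lt_of_le_of_ne Metric.infDist_nonneg (Ne.symm hd)
    set d := Metric.infDist y C with hddef
    set ε' : ℝ := (1 + ε) / 2 with hε'def
    have hεε' : ε < ε' := by simp only [hε'def]; linarith
    have hε'1 : ε' < 1 := by simp only [hε'def]; linarith
    have hε'0 : 0 < ε' := by simp only [hε'def]; linarith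
    have hlt : d < d / ε' := by
      rw [lt_div_iff₀ hε'0]
      nlinarith
    obtain ⟨s, hsC, hs⟩ := (Metric.infDist_lt_iff hne).mp hlt
    have hds : d ≤ dist y s := Metric.infDist_le_dist_of_mem hsC
    have hdys0 : 0 < dist y s := lt_of_lt_of_le hd0 hds
    set δ : ℝ := (ε' - ε) * dist y s with hδdef
    have hδ0 : 0 < δ := mul_pos (by linarith) hdys0
    have main : ∀ t : ℝ, 0 < t → t ≤ 1/2 → ε * (t * ‖s‖) < δ →
        y ≠ (1 - t) • s → False := by
      intro t ht0 ht2 htδ hyz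
      have hzne : y - (1 - t) • s ≠ 0 := sub_ne_zero.mpr hyz
      set z : X := t⁻¹ • (y - (1 - t) • s) with hzdef
      have hz0 : z ≠ 0 := smul_ne_zero (inv_ne_zero (ne_of_gt ht0)) hzne
      obtain ⟨n, hn⟩ := hx z hz0
      have hs'C : (1 - t) • s + t • (T ^ n) x ∈ C :=
        hconv hsC (horb n) (by linarith) (le_of_lt ht0) (by ring)
      have htz : t • z = y - (1 - t) • s := by
        rw [hzdef, smul_smul, mul_inv_cancel₀ (ne_of_gt ht0), one_smul]
      have heq : y - ((1 - t) • s + t • (T ^ n) x) = t • (z - (T ^ n) x) := by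
        rw [smul_sub, htz]; abel
      have hnorm : ‖y - ((1 - t) • s + t • (T ^ n) x)‖ ≤ ε * ‖y - (1 - t) • s‖ := by
        rw [heq, norm_smul, Real.norm_of_nonneg (le_of_lt ht0)]
        calc t * ‖z - (T ^ n) x‖ = t * ‖(T ^ n) x - z‖ := by rw [norm_sub_rev]
          _ ≤ t * (ε * ‖z‖) := by
              exact mul_le_mul_of_nonneg_left hn (le_of_lt ht0)
          _ = ε * ‖t • z‖ := by
              rw [norm_smul t z, Real.norm_of_nonneg (le_of_lt ht0)]; ring
          _ = ε * ‖y - (1 - t) • s‖ := by rw [htz]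
      have hbound : ‖y - (1 - t) • s‖ ≤ ‖y - s‖ + t * ‖s‖ := by
        have : y - (1 - t) • s = (y - s) + t • s := by
          rw [sub_smul, one_smul]; abel
        rw [this]
        calc ‖(y - s) + t • s‖ ≤ ‖y - s‖ + ‖t • s‖ := norm_add_le _ _
          _ = ‖y - s‖ + t * ‖s‖ := by
              rw [norm_smul, Real.norm_of_nonneg (le_of_lt ht0)]
      have hfinal : dist y ((1 - t) • s + t • (T ^ n) x) < d := by
        rw [dist_eq_norm]
        have h1 : ε * ‖y - (1 - t) • s‖ ≤ ε * (‖y - s‖ + t * ‖s‖) :=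
          mul_le_mul_of_nonneg_left hbound (le_of_lt hε0)
        have h2 : ε * (‖y - s‖ + t * ‖s‖) = ε * dist y s + ε * (t * ‖s‖) := by
          rw [dist_eq_norm]; ring
        have h3 : ε * dist y s + δ = ε' * dist y s := by
          rw [hδdef]; ring
        have h4 : ε' * dist y s < d := by
          have := (lt_div_iff₀ hε'0).mp hs
          linarith [this]
        linarith
      exact absurd (Metric.infDist_le_dist_of_mem hs'C) (not_le.mpr hfinal)
    set t₀ : ℝ := min (1/2) (δ / (ε * ‖s‖ + 1)) with ht₀def
    have hden : 0 < ε * ‖s‖ + 1 := by positivity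
    have ht₀0 : 0 < t₀ := lt_min (by norm_num) (div_pos hδ0 hden)
    have ht₀2 : t₀ ≤ 1/2 := min_le_left _ _
    have ht₀δ : ε * (t₀ * ‖s‖) < δ := by
      have h1 : t₀ ≤ δ / (ε * ‖s‖ + 1) := min_le_right _ _
      have h2 : t₀ * (ε * ‖s‖ + 1) ≤ δ := by
        rw [← le_div_iff₀ hden] at *; exact h1
      nlinarith [mul_nonneg (le_of_lt ht₀0) (norm_nonneg s)]
    by_cases h1 : y = (1 - t₀) • s
    · -- then use t₀/2
      have ht0' : 0 < t₀ / 2 := by linarith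
      have hne2 : y ≠ (1 - t₀/2) • s := by
        intro h2
        have : (1 - t₀) • s = (1 - t₀/2) • s := by rw [← h1, ← h2]
        have hs0 : (t₀/2) • s = 0 := by
          have := sub_eq_zero.mpr this
          rw [← sub_smul] at this
          have h3 : (1 - t₀) - (1 - t₀/2) = -(t₀/2) := by ring
          rw [h3, neg_smul, neg_eq_zero] at this
          exact this
        have hs0' : s = 0 := by
          rcases smul_eq_zero.mp hs0 with h | h
          · exact absurd h (ne_of_gt ht0')
          · exact h
        rw [hs0', smul_zero] at h1
        rw [h1, hs0'] at hdys0
        simp at hdys0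
      have hnn : 0 ≤ ε * (t₀ * ‖s‖) := by positivity
      have heq2 : ε * (t₀/2 * ‖s‖) = ε * (t₀ * ‖s‖) / 2 := by ring
      exact main (t₀/2) ht0' (by linarith) (by linarith) hne2
    · exact main t₀ ht₀0 ht₀2 ht₀δ h1
  have hdense : Dense C := by
    intro y
    rw [Metric.mem_closure_iff_infDist_zero hne]
    exact key y
  exact ⟨hdense, x, hdense⟩
end

section
/- Let 𝒜 be a nonempty set of polynomials and {T_k : X_k → X_k} a uniformly bounded sequence of bounded linear operators on Banach spaces such that for every n ≥ 1 the finite direct sum S_n = T_1 ⊕ ⋯ ⊕ T_n has a dense set of 𝒜-cyclic vectors on X_1 ⊕ ⋯ ⊕ X_n. Then the infinite direct sum T = ⊕_{k=1}^∞ T_k on the ℓ²-direct sum ⊕_{k=1}^∞ X_k has a dense set of 𝒜-cyclic vectors. -/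
/-!
By Baire's theorem (Birkhoff's transitivity criterion), the vectors `x` whose orbit
`{p(S)x : p ∈ 𝒜}` is dense form a dense set as soon as the space is separable and, for all
nonempty open `W` and `V`, some `x ∈ W` has `p(S)x ∈ V` for some `p ∈ 𝒜`. Truncating a point of
`W` and a point of `V` shows that both sets meet the range of the extension by zero
`Jₙ : X₀ ⊕ ⋯ ⊕ Xₙ₋₁ → ⊕ₖ Xₖ` for some `n`. As `S Jₙ = Jₙ Sₙ`, a vector of `Jₙ⁻¹ W` with dense
`Sₙ`-orbit is mapped by `Jₙ` to the required `x`. Separability also comes from the finite sums: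
the span of an orbit is separable, so each `Xₖ`, and hence `⊕ₖ Xₖ`, is separable.
-/

open Set Filter Topology TopologicalSpace Polynomial ENNReal

section DenseOrbits

variable {ι E F : Type*} [TopologicalSpace E] [TopologicalSpace F]

theorem dense_iUnion_preimage_of_dense_setOf_denseRange {f : ι → E → F}
    (h : Dense {x | DenseRange fun i => f i x}) {V : Set F} (hV : IsOpen V) (hVne : V.Nonempty) :
    Dense (⋃ i, f i ⁻¹' V) := by
  refine dense_iff_inter_open.2 fun W hW hWne => ?_
  obtain ⟨x, hxW, hx⟩ := h.inter_open_nonempty W hW hWne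
  obtain ⟨_, hxV, i, rfl⟩ := hx.inter_open_nonempty V hV hVne
  exact ⟨x, hxW, mem_iUnion.2 ⟨i, hxV⟩⟩

theorem dense_setOf_denseRange_of_dense_iUnion_preimage [BaireSpace E] [SecondCountableTopology F]
    {f : ι → E → F} (hf : ∀ i, Continuous (f i))
    (h : ∀ V : Set F, IsOpen V → V.Nonempty → Dense (⋃ i, f i ⁻¹' V)) :
    Dense {x | DenseRange fun i => f i x} := by
  have hB := isBasis_countableBasis F
  refine Dense.mono ?_ <| dense_biInter_of_isOpen
    (fun V hV => isOpen_iUnion fun i => (isOpen_of_mem_countableBasis hV).preimage (hf i))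
    (countable_countableBasis F)
    (fun V hV => h V (isOpen_of_mem_countableBasis hV) (nonempty_of_mem_countableBasis hV))
  intro x hx
  refine hB.dense_iff.2 fun V hV _ => ?_
  obtain ⟨i, hi⟩ := mem_iUnion.1 (mem_iInter₂.1 hx V hV)
  exact ⟨f i x, hi, i, rfl⟩

end DenseOrbits

section PolynomialCalculus

variable {𝕜 E F : Type*} [RCLike 𝕜] [NormedAddCommGroup E] [NormedSpace 𝕜 E]
  [NormedAddCommGroup F] [NormedSpace 𝕜 F]

theorem aeval_apply_of_comp_eq {U : E →L[𝕜] E} {V : F →L[𝕜] F} {J : E →L[𝕜] F}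
    (h : V.comp J = J.comp U) (p : 𝕜[X]) (x : E) : aeval V p (J x) = J (aeval U p x) := by
  have hpow : ∀ m : ℕ, (V ^ m).comp J = J.comp (U ^ m) := by
    intro m
    induction m with
    | zero => ext; simp
    | succ m ih =>
      simp only [pow_succ, ContinuousLinearMap.mul_def, ContinuousLinearMap.comp_assoc, h]
      rw [← ContinuousLinearMap.comp_assoc, ih, ContinuousLinearMap.comp_assoc]
  simp only [aeval_eq_sum_range, sum_apply, map_sum, smul_apply, map_smul]
  congr! 2 with m
  exact congr($(hpow m) x)

theorem separableSpace_of_denseRange_aeval {ι : Type*} (U : E →L[𝕜] E) (q : ι → 𝕜[X]) (x : E)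
    (h : DenseRange fun i => aeval U (q i) x) : SeparableSpace E := by
  have hspan : range (fun i => aeval U (q i) x) ⊆
      Submodule.span 𝕜 (range fun m : ℕ => (U ^ m) x) := by
    rintro _ ⟨i, rfl⟩
    simp only [aeval_eq_sum_range, sum_apply, smul_apply, SetLike.mem_coe]
    exact Submodule.sum_mem _ fun m _ => Submodule.smul_mem _ _ (Submodule.subset_span ⟨m, rfl⟩)
  exact (h.mono hspan).isSeparable_iff.1 (countable_range _).isSeparable.span

end PolynomialCalculus

namespace PiLp

variable (p : ℝ≥0∞) {𝕜 ι : Type*} [RCLike 𝕜] {β γ : ι → Type*}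
  [∀ i, NormedAddCommGroup (β i)] [∀ i, NormedSpace 𝕜 (β i)]
  [∀ i, NormedAddCommGroup (γ i)] [∀ i, NormedSpace 𝕜 (γ i)]

noncomputable def piMap (f : ∀ i, β i →L[𝕜] γ i) : PiLp p β →L[𝕜] PiLp p γ :=
  (PiLp.continuousLinearEquiv p 𝕜 γ).symm.toContinuousLinearMap ∘L
    ContinuousLinearMap.piMap f ∘L (PiLp.continuousLinearEquiv p 𝕜 β).toContinuousLinearMap

@[simp]
theorem piMap_apply (f : ∀ i, β i →L[𝕜] γ i) (x : PiLp p β) (i : ι) :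
    piMap p f x i = f i (x i) := rfl

theorem separableSpace_factor [SeparableSpace (PiLp p β)] (i : ι) : SeparableSpace (β i) :=
  ((Function.surjective_eval i).comp (WithLp.ofLp_surjective p)).denseRange.separableSpace
    (PiLp.continuous_apply p β i)

end PiLp

namespace lp

variable {E : ℕ → Type*} [∀ k, NormedAddCommGroup (E k)] (p : ℝ≥0∞) [Fact (1 ≤ p)]

theorem tendsto_sum_range_single (hp : p ≠ ∞) (x : lp E p) :
    Tendsto (fun n => ∑ k ∈ Finset.range n, lp.single p k (x k)) atTop (𝓝 x) :=
  (lp.hasSum_single hp x).tendsto_sum_nat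

theorem separableSpace [∀ k, SeparableSpace (E k)] (hp : p ≠ ∞) : SeparableSpace (lp E p) := by
  let partialSum (n : ℕ) (v : ∀ i : Fin n, E i) : lp E p := ∑ i : Fin n, lp.single p (i : ℕ) (v i)
  have hdense : Dense (⋃ n, range (partialSum n)) := fun x =>
    mem_closure_of_tendsto (tendsto_sum_range_single p hp x) <| Eventually.of_forall fun n =>
      mem_iUnion.2 ⟨n, fun i => x i, Fin.sum_univ_eq_sum_range (fun k => lp.single p k (x k)) n⟩
  exact hdense.isSeparable_iff.1 <| .iUnion fun n => isSeparable_range <|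
    continuous_finsetSum _ fun i _ => (isometry_single (i : ℕ)).continuous.comp (continuous_apply i)

variable (𝕜 : Type*) [RCLike 𝕜] [∀ k, NormedSpace 𝕜 (E k)]

noncomputable def extendFin (n : ℕ) : PiLp p (fun i : Fin n => E i) →L[𝕜] lp E p :=
  ∑ i : Fin n, singleContinuousLinearMap 𝕜 E p i ∘L PiLp.proj p (fun i : Fin n => E i) i

theorem tendsto_extendFin_toLp (hp : p ≠ ∞) (x : lp E p) :
    Tendsto (fun n => extendFin p 𝕜 n (WithLp.toLp p fun i : Fin n => x i)) atTop (𝓝 x) := by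
  convert tendsto_sum_range_single p hp x using 1
  ext1 n
  simp [extendFin, ← Fin.sum_univ_eq_sum_range (fun k => lp.single p k (x k))]

variable {p 𝕜} {S : lp E p →L[𝕜] lp E p} {T : ∀ k, E k →L[𝕜] E k}

theorem comp_singleContinuousLinearMap (hS : ∀ x k, S x k = T k (x k)) (k : ℕ) :
    S ∘L singleContinuousLinearMap 𝕜 E p k = singleContinuousLinearMap 𝕜 E p k ∘L T k := by
  ext a j
  simp [hS, Pi.apply_single (fun j => T j) (fun j => map_zero (T j))]

theorem comp_extendFin (hS : ∀ x k, S x k = T k (x k)) (n : ℕ) :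
    S ∘L extendFin p 𝕜 n = extendFin p 𝕜 n ∘L PiLp.piMap p fun i : Fin n => T i := by
  simp only [extendFin, ContinuousLinearMap.comp_finsetSum, ContinuousLinearMap.finsetSum_comp,
    ← ContinuousLinearMap.comp_assoc, comp_singleContinuousLinearMap hS]
  rfl

theorem dense_iUnion_preimage_aeval (hp : p ≠ ∞) (hS : ∀ x k, S x k = T k (x k)) {ι : Type*}
    (q : ι → 𝕜[X])
    (hfin : ∀ n, 1 ≤ n → Dense {v : PiLp p (fun i : Fin n => E i) |
      DenseRange fun j => aeval (PiLp.piMap p fun i : Fin n => T i) (q j) v})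
    {V : Set (lp E p)} (hV : IsOpen V) (hVne : V.Nonempty) :
    Dense (⋃ j, (fun x => aeval S (q j) x) ⁻¹' V) := by
  refine dense_iff_inter_open.2 fun W hW ⟨x, hx⟩ => ?_
  obtain ⟨y, hy⟩ := hVne
  obtain ⟨n, hn, hxn, hyn⟩ := ((eventually_ge_atTop 1).and
    (((tendsto_extendFin_toLp p 𝕜 hp x).eventually (hW.mem_nhds hx)).and
      ((tendsto_extendFin_toLp p 𝕜 hp y).eventually (hV.mem_nhds hy)))).exists
  set J := extendFin p 𝕜 n (E := E)
  obtain ⟨v, hvW, hvV⟩ := (dense_iUnion_preimage_of_dense_setOf_denseRange (hfin n hn)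
    (hV.preimage J.continuous) ⟨_, hyn⟩).inter_open_nonempty _ (hW.preimage J.continuous) ⟨_, hxn⟩
  obtain ⟨j, hj⟩ := mem_iUnion.1 hvV
  refine ⟨J v, hvW, mem_iUnion.2 ⟨j, ?_⟩⟩
  show aeval S (q j) (J v) ∈ V
  rwa [aeval_apply_of_comp_eq (comp_extendFin hS n)]

end lp

theorem direct_sum_A_cyclic_general
    {𝕜 : Type*} [RCLike 𝕜] {X : ℕ → Type*} [∀ k, NormedAddCommGroup (X k)]
    [∀ k, NormedSpace 𝕜 (X k)] [∀ k, CompleteSpace (X k)]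
    (𝒜 : Set (Polynomial 𝕜))
    (T : ∀ k, X k →L[𝕜] X k)
    (hfin : ∀ (n : ℕ), 1 ≤ n →
      ∀ Sn : PiLp 2 (fun i : Fin n => X i) →L[𝕜] PiLp 2 (fun i : Fin n => X i),
        (∀ (x : PiLp 2 (fun i : Fin n => X i)) (i : Fin n), Sn x i = T i (x i)) →
        Dense {x : PiLp 2 (fun i : Fin n => X i) |
          Dense ((fun p : Polynomial 𝕜 => (Polynomial.aeval Sn p) x) '' 𝒜)})
    (S : lp X 2 →L[𝕜] lp X 2) (hS : ∀ (x : lp X 2) (k : ℕ), (S x : ∀ k, X k) k = T k (x k)) :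
    Dense {x : lp X 2 | Dense ((fun p : Polynomial 𝕜 => (Polynomial.aeval S p) x) '' 𝒜)} := by
  have hcyc (n : ℕ) (hn : 1 ≤ n) : Dense {v | DenseRange fun p : 𝒜 =>
      aeval (PiLp.piMap 2 fun i : Fin n => T i) (p : 𝕜[X]) v} := by
    simpa only [image_eq_range, DenseRange] using hfin n hn _ (PiLp.piMap_apply 2 _)
  have (k : ℕ) : SeparableSpace (X k) := by
    obtain ⟨v, hv⟩ := (hcyc (k + 1) k.succ_pos).nonempty
    have := separableSpace_of_denseRange_aeval _ _ v hv
    exact PiLp.separableSpace_factor 2 (β := fun i : Fin (k + 1) => X i) ⟨k, k.lt_succ_self⟩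
  have := lp.separableSpace (E := X) 2 ofNat_ne_top
  simp only [image_eq_range]
  exact dense_setOf_denseRange_of_dense_iUnion_preimage (fun p => (aeval S p.1).continuous)
    fun V hV hVne => lp.dense_iUnion_preimage_aeval ofNat_ne_top hS _ hcyc hV hVne

/-- Let `𝒜` be a nonempty set of polynomials and `(T k : X k →L X k)` a uniformly bounded
sequence of operators on Banach spaces such that for every `n ≥ 1` the finite direct sum
`S n = T 0 ⊕ ⋯ ⊕ T (n-1)` has a dense set of `𝒜`-cyclic vectors.  Then the direct sum
`S = ⊕ₖ T k` on the `ℓ²`-direct sum `⊕ₖ X k` has a dense set of `𝒜`-cyclic vectors. -/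
theorem direct_sum_A_cyclic
    {𝕜 : Type*} [RCLike 𝕜] {X : ℕ → Type*} [∀ k, NormedAddCommGroup (X k)]
    [∀ k, NormedSpace 𝕜 (X k)] [∀ k, CompleteSpace (X k)]
    (𝒜 : Set (Polynomial 𝕜)) (h𝒜 : 𝒜.Nonempty)
    (T : ∀ k, X k →L[𝕜] X k) (C : ℝ) (hC : ∀ k, ‖T k‖ ≤ C)
    (hfin : ∀ (n : ℕ), 1 ≤ n →
      ∀ Sn : PiLp 2 (fun i : Fin n => X i) →L[𝕜] PiLp 2 (fun i : Fin n => X i),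
        (∀ (x : PiLp 2 (fun i : Fin n => X i)) (i : Fin n), Sn x i = T i (x i)) →
        Dense {x : PiLp 2 (fun i : Fin n => X i) |
          Dense ((fun p : Polynomial 𝕜 => (Polynomial.aeval Sn p) x) '' 𝒜)})
    (S : lp X 2 →L[𝕜] lp X 2) (hS : ∀ (x : lp X 2) (k : ℕ), (S x : ∀ k, X k) k = T k (x k)) :
    Dense {x : lp X 2 | Dense ((fun p : Polynomial 𝕜 => (Polynomial.aeval S p) x) '' 𝒜)} :=
  direct_sum_A_cyclic_general 𝒜 T hfin S hS
end

section
/- If T is a bounded linear operator on a Banach space and there exists a convex polynomial p such that p(T) is hypercyclic, then T is convex-cyclic. -/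
/-- If `T` is a bounded linear operator on a (real or complex) Banach space and there exists
a convex polynomial `p` (nonnegative real coefficients summing to 1) such that `p(T)` is
hypercyclic, then `T` is convex-cyclic. -/
theorem convexCyclic_of_convex_poly_hypercyclic
    {𝕜 : Type*} [RCLike 𝕜] {X : Type*} [NormedAddCommGroup X] [NormedSpace 𝕜 X]
    [NormedSpace ℝ X] [IsScalarTower ℝ 𝕜 X] [CompleteSpace X]
    (T : X →L[𝕜] X) (n : ℕ) (a : ℕ → ℝ) (ha : ∀ k, 0 ≤ a k)
    (hsum : ∑ k ∈ Finset.range (n + 1), a k = 1)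
    (hhc : ∃ x : X, Dense (Set.range fun m : ℕ =>
      ((∑ k ∈ Finset.range (n + 1), ((a k : 𝕜)) • T ^ k) ^ m) x)) :
    ∃ x : X, Dense (convexHull ℝ (Set.range fun m : ℕ => (T ^ m) x)) := by
  obtain ⟨x, hx⟩ := hhc
  refine ⟨x, ?_⟩
  set S : X →L[𝕜] X := ∑ k ∈ Finset.range (n + 1), ((a k : 𝕜)) • T ^ k with hS
  set O : Set X := Set.range fun m : ℕ => (T ^ m) x with hO
  set C : Set X := convexHull ℝ O with hC
  have hconv : Convex ℝ C := convex_convexHull ℝ O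
  have hOC : O ⊆ C := subset_convexHull ℝ O
  have hTk : ∀ (k : ℕ), ∀ y ∈ C, (T ^ k) y ∈ C := by
    intro k
    have hpre : Convex ℝ ((T ^ k) ⁻¹' C) := by
      intro u hu v hv s t hs ht hst
      simp only [Set.mem_preimage, map_add, ContinuousLinearMap.map_smul_of_tower] at *
      exact hconv hu hv hs ht hst
    have hsub : C ⊆ (T ^ k) ⁻¹' C := by
      refine convexHull_min ?_ hpre
      rintro _ ⟨m, rfl⟩
      exact hOC ⟨k + m, by simp [pow_add]⟩
    exact fun y hy => hsub hy
  have hSC : ∀ y ∈ C, S y ∈ C := by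
    intro y hy
    have hrep : S y = ∑ k ∈ Finset.range (n + 1), a k • (T ^ k) y := by
      simp only [hS, ContinuousLinearMap.coe_sum', Finset.sum_apply,
        ContinuousLinearMap.coe_smul', Pi.smul_apply]
      refine Finset.sum_congr rfl fun k _ => ?_
      rw [RCLike.real_smul_eq_coe_smul (K := 𝕜)]
    rw [hrep]
    exact hconv.sum_mem (fun k _ => ha k) hsum (fun k _ => hTk k y hy)
  have hmem : ∀ m : ℕ, (S ^ m) x ∈ C := by
    intro m
    induction m with
    | zero => simpa using hOC ⟨0, rfl⟩
    | succ m ih =>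
      rw [pow_succ']
      exact hSC _ ih
  exact Dense.mono (by rintro _ ⟨m, rfl⟩; exact hmem m) hx
end
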